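/- arXiv:2009.06135 — 8 statements merged into one kernel-verified Lean document; each statement's English description precedes it below -/
import Mathlib

section
/- For every positive integer k and every real ε > 0, there exists a positive integer N such that every F_k(3)-free simple graph G on n > N vertices with independence number α(G) ≤ ε·n has fewer than ε·n² edges. -/
/-- `G` contains the `k`-fan `F_k(3)`: a vertex `v` and `k` pairwise disjoint pairs of
vertices, none containing `v`, each pair together with `v` inducing a triangle. -/
def ContainsFan {V : Type*} (G : SimpleGraph V) (k r : ℕ) : Prop :=
  ∃ (v : V) (S : Fin k → Set V),
    (∀ i, v ∉ S i) ∧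
    (∀ i, (S i).ncard = 2 * r) ∧
    (∀ i j, i ≠ j → Disjoint (S i) (S j)) ∧
    (∀ i, G.IsClique (insert v (S i)))

/-- A set of vertices is independent if no two of its vertices are adjacent. -/
def IsIndepSet {V : Type*} (G : SimpleGraph V) (s : Set V) : Prop :=
  s.Pairwise fun u v => ¬ G.Adj u v
open Finset

section Matching

def HasMatchingIn {V : Type*} (G : SimpleGraph V) (k : ℕ) (s : Set V) : Prop :=
  ∃ S : Fin k → Set V, (∀ i, S i ⊆ s) ∧ (∀ i, (S i).ncard = 2) ∧
    (∀ i j, i ≠ j → Disjoint (S i) (S j)) ∧ (∀ i, G.IsClique (S i))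

variable {V : Type*} {G : SimpleGraph V}

lemma exists_adj_of_not_isIndepSet {s : Set V} (h : ¬ IsIndepSet G s) :
    ∃ a ∈ s, ∃ b ∈ s, a ≠ b ∧ G.Adj a b := by
  simpa [IsIndepSet, Set.Pairwise] using h

lemma HasMatchingIn.insert_edge {k : ℕ} {s : Set V} {a b : V}
    (h : HasMatchingIn G k (s \ {a, b})) (ha : a ∈ s) (hb : b ∈ s) (hab : G.Adj a b) :
    HasMatchingIn G (k + 1) s := by
  obtain ⟨S, hsub, hcard, hdisj, hclique⟩ := h
  have hdisj_edge : ∀ i, Disjoint {a, b} (S i) :=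
    fun i => Set.disjoint_of_subset_right (hsub i) Set.disjoint_sdiff_right
  refine ⟨Fin.cons {a, b} S, ?_, ?_, ?_, ?_⟩
  · refine Fin.cases (Set.pair_subset ha hb) fun i => (hsub i).trans Set.sdiff_subset
  · exact Fin.cases (Set.ncard_pair hab.ne) hcard
  · intro i j hij
    induction i using Fin.cases <;> induction j using Fin.cases
    · exact absurd rfl hij
    · simpa using hdisj_edge _
    · simpa using (hdisj_edge _).symm
    · simpa using hdisj _ _ (ne_of_apply_ne Fin.succ hij)
  · exact Fin.cases (G.isClique_pair.mpr fun _ => hab) hclique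

lemma exists_isIndepSet_of_not_hasMatchingIn :
    ∀ {k : ℕ} {s : Set V}, ¬ HasMatchingIn G k s →
      ∃ t ⊆ s, IsIndepSet G t ∧ s.ncard ≤ t.ncard + 2 * k
  | 0, _, h =>
    absurd ⟨Fin.elim0, fun i => i.elim0, fun i => i.elim0, fun i => i.elim0, fun i => i.elim0⟩ h
  | k + 1, s, h => by
    by_cases hs : IsIndepSet G s
    · exact ⟨s, subset_rfl, hs, by omega⟩
    obtain ⟨a, ha, b, hb, -, hab⟩ := exists_adj_of_not_isIndepSet hs
    obtain ⟨t, hts, ht, hcard⟩ :=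
      exists_isIndepSet_of_not_hasMatchingIn fun hM => h (hM.insert_edge ha hb hab)
    have hs_le : s.ncard ≤ (s \ {a, b}).ncard + 2 :=
      (Set.ncard_le_ncard_sdiff_add_ncard s {a, b}).trans_eq (by rw [Set.ncard_pair hab.ne])
    exact ⟨t, hts.trans Set.sdiff_subset, ht, by omega⟩

lemma containsFan_of_hasMatchingIn_neighborSet {k : ℕ} {v : V}
    (h : HasMatchingIn G k (G.neighborSet v)) : ContainsFan G k 1 := by
  obtain ⟨S, hsub, hcard, hdisj, hclique⟩ := h
  exact ⟨v, S, fun i hv => G.irrefl (hsub i hv), hcard, hdisj,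
    fun i => (hclique i).insert fun b hb _ => hsub i hb⟩

lemma exists_isIndepSet_degree_le_of_not_containsFan [Fintype V] [DecidableRel G.Adj]
    {k : ℕ} (h : ¬ ContainsFan G k 1) (v : V) :
    ∃ t, IsIndepSet G t ∧ G.degree v ≤ t.ncard + 2 * k := by
  obtain ⟨t, -, ht, hcard⟩ := exists_isIndepSet_of_not_hasMatchingIn
    (mt containsFan_of_hasMatchingIn_neighborSet h : ¬ HasMatchingIn G k (G.neighborSet v))
  refine ⟨t, ht, ?_⟩
  rwa [← G.card_neighborFinset_eq_degree, ← Set.ncard_coe_finset, G.coe_neighborFinset]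

end Matching

lemma SimpleGraph.two_mul_card_edgeFinset_le {V : Type*} [Fintype V] (G : SimpleGraph V)
    [DecidableRel G.Adj] {D : ℝ} (h : ∀ v, (G.degree v : ℝ) ≤ D) :
    2 * (#G.edgeFinset : ℝ) ≤ Fintype.card V * D := by
  have hsum : ∑ v, (G.degree v : ℝ) = 2 * #G.edgeFinset := by
    exact_mod_cast G.sum_degrees_eq_twice_card_edges
  calc 2 * (#G.edgeFinset : ℝ) = ∑ v, (G.degree v : ℝ) := hsum.symm
    _ ≤ ∑ _v : V, D := sum_le_sum fun v _ => h v
    _ = Fintype.card V * D := by simp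

theorem ramsey_turan_fan_triangle_general (k : ℕ) (ε : ℝ) (hε : 0 < ε) :
    ∃ N : ℕ, 0 < N ∧
      ∀ n : ℕ, n > N → ∀ G : SimpleGraph (Fin n),
        ¬ ContainsFan G k 1 →
        (∀ s : Set (Fin n), IsIndepSet G s → (s.ncard : ℝ) ≤ ε * n) →
        (G.edgeSet.ncard : ℝ) < ε * (n : ℝ) ^ 2 := by
  classical
  refine ⟨⌈2 * k / ε⌉₊ + 1, Nat.succ_pos _, fun n hn G hfan hind => ?_⟩
  have hn_pos : (0 : ℝ) < n := by exact_mod_cast (Nat.succ_pos _).trans hn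
  have hεn : 2 * k < ε * n := by
    have := (div_lt_iff₀ hε).mp (Nat.lt_of_ceil_lt (Nat.lt_of_succ_lt hn))
    linarith
  have hdeg : ∀ v, (G.degree v : ℝ) ≤ ε * n + 2 * k := fun v => by
    obtain ⟨t, ht, hv⟩ := exists_isIndepSet_degree_le_of_not_containsFan hfan v
    have := hind t ht
    calc (G.degree v : ℝ) ≤ t.ncard + 2 * k := by exact_mod_cast hv
      _ ≤ ε * n + 2 * k := by linarith
  have hedges := G.two_mul_card_edgeFinset_le hdeg
  rw [Fintype.card_fin, ← Set.ncard_coe_finset, G.coe_edgeFinset] at hedges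
  nlinarith

theorem ramsey_turan_fan_triangle (k : ℕ) (hk : 0 < k) (ε : ℝ) (hε : 0 < ε) :
    ∃ N : ℕ, 0 < N ∧
      ∀ n : ℕ, n > N → ∀ G : SimpleGraph (Fin n),
        ¬ ContainsFan G k 1 →
        (∀ s : Set (Fin n), IsIndepSet G s → (s.ncard : ℝ) ≤ ε * n) →
        (G.edgeSet.ncard : ℝ) < ε * (n : ℝ) ^ 2 :=
  ramsey_turan_fan_triangle_general k ε hε
end

section
/- Let k be a positive integer and let G be an F_k(3)-free simple graph on n vertices with independence number α(G) ≤ a. Then the number of edges of G is at most n·(a + 2(k-1))/2. -/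
lemma exists_pairs {n : ℕ} (G : SimpleGraph (Fin n)) (a : ℕ)
    (hindep : ∀ s : Set (Fin n), IsIndepSet G s → s.ncard ≤ a) :
    ∀ (m : ℕ) (T : Finset (Fin n)), a + 2 * m < T.card →
      ∃ S : Fin (m+1) → Fin n × Fin n,
        (∀ i, (S i).1 ∈ T ∧ (S i).2 ∈ T ∧ G.Adj (S i).1 (S i).2) ∧
        (∀ i j, i ≠ j → Disjoint ({(S i).1, (S i).2} : Set (Fin n)) {(S j).1, (S j).2}) := by
  intro m
  induction m with
  | zero =>
    intro T hT
    have hni : ¬ IsIndepSet G (↑T : Set (Fin n)) := by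
      intro h
      have := hindep _ h
      rw [Set.ncard_coe_finset] at this
      omega
    rw [IsIndepSet, Set.Pairwise] at hni
    push_neg at hni
    obtain ⟨x, hx, y, hy, hxy, hadj⟩ := hni
    refine ⟨fun _ => (x, y), fun i => ⟨hx, hy, hadj⟩, fun i j hij => ?_⟩
    exact absurd (Fin.ext (by omega)) hij
  | succ m ih =>
    intro T hT
    have hni : ¬ IsIndepSet G (↑T : Set (Fin n)) := by
      intro h
      have := hindep _ h
      rw [Set.ncard_coe_finset] at this
      omega
    rw [IsIndepSet, Set.Pairwise] at hni
    push_neg at hni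
    obtain ⟨x, hx, y, hy, hxy, hadj⟩ := hni
    set T' := T \ {x, y} with hT'
    have hcard : a + 2 * m < T'.card := by
      have h1 : T.card ≤ T'.card + 2 := by
        have h2 := Finset.card_le_card_sdiff_add_card (s := T) (t := ({x, y} : Finset (Fin n)))
        have h3 : ({x, y} : Finset (Fin n)).card ≤ 2 :=
          (Finset.card_insert_le _ _).trans (by simp)
        rw [← hT'] at h2
        omega
      omega
    obtain ⟨S', hS'1, hS'2⟩ := ih T' hcard
    refine ⟨Fin.cons (x, y) S', ?_, ?_⟩
    · intro i
      refine Fin.cases ?_ ?_ i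
      · exact ⟨hx, hy, hadj⟩
      · intro j
        have h := hS'1 j
        simp only [Fin.cons_succ]
        exact ⟨Finset.mem_sdiff.mp h.1 |>.1, Finset.mem_sdiff.mp h.2.1 |>.1, h.2.2⟩
    · have hdisj : ∀ j : Fin (m+1), Disjoint ({x, y} : Set (Fin n)) {(S' j).1, (S' j).2} := by
        intro j
        have h := hS'1 j
        have h1 := (Finset.mem_sdiff.mp h.1).2
        have h2 := (Finset.mem_sdiff.mp h.2.1).2
        simp only [Finset.mem_insert, Finset.mem_singleton] at h1 h2
        rw [Set.disjoint_iff_inter_eq_empty]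
        ext z
        simp only [Set.mem_inter_iff, Set.mem_insert_iff, Set.mem_singleton_iff, Set.mem_empty_iff_false, iff_false]
        rintro ⟨h3 | h3, h4 | h4⟩ <;> subst h3 <;> subst h4 <;> tauto
      intro i j hij
      revert hij
      refine Fin.cases ?_ (fun i' => ?_) i <;> refine Fin.cases ?_ (fun j' => ?_) j <;> intro hij
      · exact absurd rfl hij
      · simpa using hdisj j'
      · simpa using (hdisj i').symm
      · simp only [Fin.cons_succ]
        exact hS'2 i' j' (fun h => hij (congrArg Fin.succ h))

theorem edge_bound_of_fan_free (k : ℕ) (hk : 0 < k) (n a : ℕ)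
    (G : SimpleGraph (Fin n))
    (hfree : ¬ ContainsFan G k 1)
    (hindep : ∀ s : Set (Fin n), IsIndepSet G s → s.ncard ≤ a) :
    (G.edgeSet.ncard : ℝ) ≤ (n : ℝ) * ((a : ℝ) + 2 * ((k : ℝ) - 1)) / 2 := by
  classical
  have hdeg : ∀ v : Fin n, G.degree v ≤ a + 2 * (k - 1) := by
    intro v
    by_contra h
    push_neg at h
    rw [← SimpleGraph.card_neighborFinset_eq_degree] at h
    obtain ⟨S, hS1, hS2⟩ := exists_pairs G a hindep (k-1) (G.neighborFinset v) h
    apply hfree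
    have hkk : k - 1 + 1 = k := Nat.succ_pred_eq_of_pos hk
    refine ⟨v, fun i => {(S (Fin.cast hkk.symm i)).1, (S (Fin.cast hkk.symm i)).2}, ?_, ?_, ?_, ?_⟩
    · intro i hv
      obtain ⟨h1, h2, -⟩ := hS1 (Fin.cast hkk.symm i)
      rw [SimpleGraph.mem_neighborFinset] at h1 h2
      rcases hv with hv | hv
      · exact G.irrefl (hv ▸ h1)
      · rw [Set.mem_singleton_iff] at hv
        exact G.irrefl (hv ▸ h2)
    · intro i
      obtain ⟨-, -, hadj⟩ := hS1 (Fin.cast hkk.symm i)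
      rw [Set.ncard_pair hadj.ne]
    · intro i j hij
      exact hS2 _ _ (fun h => hij (by simpa using congrArg (Fin.cast hkk) h))
    · intro i
      obtain ⟨h1, h2, hadj⟩ := hS1 (Fin.cast hkk.symm i)
      rw [SimpleGraph.mem_neighborFinset] at h1 h2
      intro u hu w hw huw
      simp only [Set.mem_insert_iff, Set.mem_singleton_iff] at hu hw
      rcases hu with rfl | rfl | rfl <;> rcases hw with rfl | rfl | rfl <;>
        first
        | exact absurd rfl huw
        | assumption
        | exact h1.symm
        | exact h2.symm
        | exact hadj.symm
  have hsum : 2 * G.edgeFinset.card ≤ n * (a + 2 * (k - 1)) := by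
    have h1 := SimpleGraph.sum_degrees_eq_twice_card_edges G
    calc 2 * G.edgeFinset.card = ∑ v, G.degree v := h1.symm
    _ ≤ ∑ _v : Fin n, (a + 2 * (k - 1)) := Finset.sum_le_sum (fun v _ => hdeg v)
    _ = n * (a + 2 * (k - 1)) := by simp [Finset.sum_const, Fintype.card_fin, mul_comm]
  have hE : G.edgeSet.ncard = G.edgeFinset.card := by
    rw [SimpleGraph.edgeFinset, Set.ncard_eq_toFinset_card']
  rw [hE]
  have hcast : ((a : ℝ) + 2 * ((k : ℝ) - 1)) = ((a + 2 * (k-1) : ℕ) : ℝ) := by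
    push_cast [Nat.cast_sub hk]
    ring
  rw [hcast, le_div_iff₀ (by norm_num : (0:ℝ) < 2)]
  calc (G.edgeFinset.card : ℝ) * 2 = ((2 * G.edgeFinset.card : ℕ) : ℝ) := by push_cast; ring
  _ ≤ ((n * (a + 2 * (k-1)) : ℕ) : ℝ) := by exact_mod_cast hsum
  _ = (n : ℝ) * ((a + 2*(k-1) : ℕ) : ℝ) := by push_cast; ring
end

section
/- Let k be a positive integer and let G be an F_k(3)-free simple graph. Then every vertex x of G has degree d(x) ≤ α(G) + 2(k-1), where α(G) is the independence number of G. -/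
/-- The independence number of `G`: the maximum size of an independent set. -/
noncomputable def indepNum {V : Type*} [Fintype V] (G : SimpleGraph V) : ℕ :=
  sSup {m | ∃ s : Set V, IsIndepSet G s ∧ s.ncard = m}

lemma aux_iUnion_succ {V : Type*} {n : ℕ} (p : Fin (n + 1) → Set V) :
    (⋃ i, p i) = (⋃ i : Fin n, p i.castSucc) ∪ p (Fin.last n) := by
  ext a
  simp only [Set.mem_iUnion, Set.mem_union]
  constructor
  · rintro ⟨i, hi⟩
    rcases Fin.lastCases (motive := fun i => a ∈ p i → (∃ i : Fin n, a ∈ p i.castSucc) ∨ a ∈ p (Fin.last n))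
      (fun h => Or.inr h) (fun j h => Or.inl ⟨j, h⟩) i hi with h | h
    · exact Or.inl h
    · exact Or.inr h
  · rintro (⟨i, hi⟩ | h)
    · exact ⟨i.castSucc, hi⟩
    · exact ⟨Fin.last n, h⟩

lemma aux_ncard_iUnion_le {V : Type*} [Fintype V] : ∀ {n : ℕ} (p : Fin n → Set V),
    (⋃ i, p i).ncard ≤ ∑ i, (p i).ncard := by
  intro n
  induction n with
  | zero => intro p; simp
  | succ n ih =>
    intro p
    rw [aux_iUnion_succ, Fin.sum_univ_castSucc]
    calc ((⋃ i : Fin n, p i.castSucc) ∪ p (Fin.last n)).ncard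
        ≤ (⋃ i : Fin n, p i.castSucc).ncard + (p (Fin.last n)).ncard :=
          Set.ncard_union_le _ _
      _ ≤ (∑ i : Fin n, (p i.castSucc).ncard) + (p (Fin.last n)).ncard := by
          exact Nat.add_le_add_right (ih _) _

theorem degree_bound_of_fan_free {V : Type*} [Fintype V] (k : ℕ) (hk : 0 < k)
    (G : SimpleGraph V) (hfree : ¬ ContainsFan G k 1) (x : V) :
    (G.neighborSet x).ncard ≤ indepNum G + 2 * (k - 1) := by
  classical
  set N := G.neighborSet x with hN
  set Good : ℕ → Prop := fun m => ∃ p : Fin m → Set V,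
    (∀ i, p i ⊆ N) ∧ (∀ i, (p i).ncard = 2) ∧
    (∀ i j, i ≠ j → Disjoint (p i) (p j)) ∧
    (∀ i, G.IsClique (p i)) with hGoodDef
  have hbdd : BddAbove {m | Good m} := by
    refine ⟨Fintype.card V, fun m hm => ?_⟩
    obtain ⟨p, hsub, hcard, hdisj, _⟩ := hm
    have hne : ∀ i, (p i).Nonempty := by
      intro i
      rw [← Set.ncard_pos (Set.toFinite _), hcard i]; norm_num
    choose f hf using hne
    have hinj : Function.Injective f := by
      intro i j hij
      by_contra h
      exact Set.disjoint_left.mp (hdisj i j h) (hf i) (hij ▸ hf j)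
    calc m = Fintype.card (Fin m) := (Fintype.card_fin m).symm
      _ ≤ Fintype.card V := Fintype.card_le_of_injective f hinj
  have hgood0 : Good 0 := ⟨fun i => i.elim0, fun i => i.elim0, fun i => i.elim0,
    fun i => i.elim0, fun i => i.elim0⟩
  set m := sSup {m | Good m} with hm
  have hmem : Good m := Nat.sSup_mem ⟨0, hgood0⟩ hbdd
  have hnotk : ¬ Good k := by
    rintro ⟨p, hsub, hcard, hdisj, hcl⟩
    apply hfree
    refine ⟨x, p, ?_, ?_, hdisj, ?_⟩
    · intro i hx
      exact G.irrefl (hsub i hx)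
    · intro i; rw [hcard i]
    · intro i
      refine (hcl i).insert ?_
      intro b hb _
      exact hsub i hb
  have hmk : m ≤ k - 1 := by
    have hlt : m < k := by
      by_contra h
      push_neg at h
      apply hnotk
      obtain ⟨p, hsub, hcard, hdisj, hcl⟩ := hmem
      refine ⟨fun i => p (Fin.castLE h i), fun i => hsub _, fun i => hcard _, ?_, fun i => hcl _⟩
      intro i j hij
      exact hdisj _ _ (fun hc => hij (Fin.castLE_injective h hc))
    omega
  obtain ⟨p, hsub, hcard, hdisj, hcl⟩ := hmem
  set U := ⋃ i, p i with hU
  set I := N \ U with hI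
  have hIindep : IsIndepSet G I := by
    intro u hu w hw huw hadj
    have hqgood : Good (m + 1) := by
      refine ⟨Fin.snoc p {u, w}, ?_, ?_, ?_, ?_⟩
      · intro i
        refine Fin.lastCases ?_ ?_ i
        · rw [Fin.snoc_last]
          rintro a (rfl | rfl)
          exacts [hu.1, hw.1]
        · intro j; rw [Fin.snoc_castSucc]; exact hsub j
      · intro i
        refine Fin.lastCases ?_ ?_ i
        · rw [Fin.snoc_last]; exact Set.ncard_pair huw
        · intro j; rw [Fin.snoc_castSucc]; exact hcard j
      · have hdisj' : ∀ j : Fin m, Disjoint ({u, w} : Set V) (p j) := by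
          intro j
          rw [Set.disjoint_left]
          rintro a (rfl | rfl) ha
          · exact hu.2 (Set.mem_iUnion.mpr ⟨j, ha⟩)
          · exact hw.2 (Set.mem_iUnion.mpr ⟨j, ha⟩)
        intro i j
        induction i using Fin.lastCases with
        | last =>
          induction j using Fin.lastCases with
          | last => intro h; exact absurd rfl h
          | cast j' =>
            intro _
            rw [Fin.snoc_last, Fin.snoc_castSucc]
            exact hdisj' j'
        | cast i' =>
          induction j using Fin.lastCases with
          | last =>
            intro _
            rw [Fin.snoc_last, Fin.snoc_castSucc]
            exact (hdisj' i').symm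
          | cast j' =>
            intro hij
            rw [Fin.snoc_castSucc, Fin.snoc_castSucc]
            exact hdisj i' j' (fun hc => hij (by rw [hc]))
      · intro i
        refine Fin.lastCases ?_ ?_ i
        · rw [Fin.snoc_last]
          exact SimpleGraph.isClique_pair.mpr (fun _ => hadj)
        · intro j; rw [Fin.snoc_castSucc]; exact hcl j
    have : m + 1 ≤ m := le_csSup hbdd hqgood
    omega
  have hIle : I.ncard ≤ indepNum G := by
    apply le_csSup
    · refine ⟨Fintype.card V, ?_⟩
      rintro n ⟨s, _, rfl⟩
      calc s.ncard ≤ (Set.univ : Set V).ncard := Set.ncard_le_ncard (Set.subset_univ s) (Set.finite_univ)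
        _ = Fintype.card V := by simp [Set.ncard_univ, Nat.card_eq_fintype_card]
    · exact ⟨I, hIindep, rfl⟩
  have hUle : U.ncard ≤ 2 * m := by
    calc U.ncard ≤ ∑ i, (p i).ncard := aux_ncard_iUnion_le p
      _ = ∑ _i : Fin m, 2 := by exact Finset.sum_congr rfl (fun i _ => hcard i)
      _ = 2 * m := by simp [mul_comm]
  have hNsub : N ⊆ I ∪ U := by
    intro a ha
    by_cases h : a ∈ U
    · exact Or.inr h
    · exact Or.inl ⟨ha, h⟩
  calc N.ncard ≤ (I ∪ U).ncard := Set.ncard_le_ncard hNsub (Set.toFinite _)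
    _ ≤ I.ncard + U.ncard := Set.ncard_union_le _ _
    _ ≤ indepNum G + 2 * m := Nat.add_le_add hIle hUle
    _ ≤ indepNum G + 2 * (k - 1) := by omega
end

section
/- Let r be a positive integer and ε > 0 a real number. There exists a positive integer N = N(ε) such that for every simple graph G on n > N vertices and every clique D of G with 1 ≤ |D| ≤ r, if every vertex v ∈ D has degree d(v) ≥ (1 - 1/r + ε/3)·n in G, then there exists a clique D* of G containing D as a proper subset. -/
theorem clique_extension (r : ℕ) (hr : 0 < r) (ε : ℝ) (hε : 0 < ε) :
    ∃ N : ℕ, 0 < N ∧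
      ∀ n : ℕ, n > N → ∀ G : SimpleGraph (Fin n), ∀ D : Set (Fin n),
        G.IsClique D → 1 ≤ D.ncard → D.ncard ≤ r →
        (∀ v ∈ D, (1 - 1 / (r : ℝ) + ε / 3) * n ≤ ((G.neighborSet v).ncard : ℝ)) →
        ∃ Dstar : Set (Fin n), G.IsClique Dstar ∧ D ⊂ Dstar := by
  classical
  refine ⟨1, one_pos, ?_⟩
  intro n hn G D hclique hD1 hDr hdeg
  have hn0 : 0 < n := lt_trans one_pos hn
  have hnR : (0 : ℝ) < n := by exact_mod_cast hn0
  have hDfin : D.Finite := Set.toFinite D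
  set Df : Finset (Fin n) := hDfin.toFinset with hDfdef
  have hmemDf : ∀ v, v ∈ Df ↔ v ∈ D := fun v => hDfin.mem_toFinset
  set c : ℝ := 1 / (r : ℝ) - ε / 3 with hc
  set B : Fin n → Finset (Fin n) := fun v => Finset.univ.filter (fun w => ¬ G.Adj v w)
    with hBdef
  -- each bad set has card ≤ c * n
  have hBcard : ∀ v ∈ D, ((B v).card : ℝ) ≤ c * n := by
    intro v hv
    have hdv := hdeg v hv
    have hncard : (G.neighborSet v).ncard = (G.neighborFinset v).card := by
      rw [SimpleGraph.neighborFinset_def, Set.ncard_eq_toFinset_card']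
    have hBc : (B v) = (G.neighborFinset v)ᶜ := by
      ext w
      simp [hBdef, SimpleGraph.mem_neighborFinset]
    have hcardB : (B v).card = n - (G.neighborFinset v).card := by
      rw [hBc, Finset.card_compl]
      simp
    have hle : (G.neighborFinset v).card ≤ n := by
      simpa using Finset.card_le_univ (G.neighborFinset v)
    have : ((B v).card : ℝ) = (n : ℝ) - (G.neighborFinset v).card := by
      rw [hcardB]
      push_cast [Nat.cast_sub hle]
      ring
    rw [this]
    rw [hncard] at hdv
    have : (1 - 1 / (r : ℝ) + ε / 3) * n = n - c * n := by rw [hc]; ring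
    rw [this] at hdv
    linarith
  -- c > 0
  obtain ⟨v₀, hv₀⟩ : D.Nonempty := by
    rcases Set.eq_empty_or_nonempty D with h | h
    · simp [h] at hD1
    · exact h
  have hcpos : 0 < c * n := by
    have hmem : v₀ ∈ B v₀ := by simp [hBdef]
    have h1 : (1 : ℝ) ≤ ((B v₀).card : ℝ) := by
      exact_mod_cast Finset.card_pos.mpr ⟨v₀, hmem⟩
    linarith [hBcard v₀ hv₀]
  have hc0 : 0 < c := by nlinarith
  -- union bound
  set U : Finset (Fin n) := Df.biUnion B with hUdef
  have hDfcard : Df.card = D.ncard := (Set.ncard_eq_toFinset_card D hDfin).symm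
  have hUcard : ((U.card : ℝ)) < n := by
    have h1 : U.card ≤ ∑ v ∈ Df, (B v).card := Finset.card_biUnion_le
    have h2 : ((∑ v ∈ Df, (B v).card : ℕ) : ℝ) ≤ ∑ v ∈ Df, ((B v).card : ℝ) := by
      push_cast
      exact le_refl _
    have h3 : ∑ v ∈ Df, ((B v).card : ℝ) ≤ ∑ _v ∈ Df, c * n := by
      apply Finset.sum_le_sum
      intro v hv
      exact hBcard v ((hmemDf v).mp hv)
    have h4 : ∑ _v ∈ Df, c * n = (Df.card : ℝ) * (c * n) := by
      rw [Finset.sum_const, nsmul_eq_mul]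
    have h5 : (Df.card : ℝ) ≤ r := by
      rw [hDfcard]; exact_mod_cast hDr
    have h6 : (Df.card : ℝ) * (c * n) ≤ r * (c * n) :=
      mul_le_mul_of_nonneg_right h5 hcpos.le
    have hrR : (0 : ℝ) < r := by exact_mod_cast hr
    have h7 : (r : ℝ) * (c * n) = n - r * (ε / 3) * n := by
      rw [hc]
      field_simp
    have h8 : 0 < (r : ℝ) * (ε / 3) * n := by positivity
    have h9 : ((U.card : ℕ) : ℝ) ≤ ((∑ v ∈ Df, (B v).card : ℕ) : ℝ) := by exact_mod_cast h1
    calc ((U.card : ℕ) : ℝ) ≤ _ := h9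
      _ ≤ _ := h2
      _ ≤ _ := h3
      _ = _ := h4
      _ ≤ _ := h6
      _ = _ := h7
      _ < n := by linarith
  -- find a common neighbor
  have hUne : U ≠ Finset.univ := by
    intro h
    rw [h] at hUcard
    simp [Finset.card_univ] at hUcard
  obtain ⟨w, hw⟩ : ∃ w, w ∉ U := by
    by_contra h
    push_neg at h
    exact hUne (Finset.eq_univ_iff_forall.mpr h)
  have hadj : ∀ v ∈ D, G.Adj v w := by
    intro v hv
    by_contra hna
    exact hw (Finset.mem_biUnion.mpr ⟨v, (hmemDf v).mpr hv, by simp [hBdef, hna]⟩)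
  have hwD : w ∉ D := by
    intro hwD
    exact hw (Finset.mem_biUnion.mpr ⟨w, (hmemDf w).mpr hwD, by simp [hBdef]⟩)
  refine ⟨insert w D, ?_, Set.ssubset_insert hwD⟩
  exact hclique.insert (fun v hv _ => (hadj v hv).symm)
end

section
/- Let r be a positive integer, ε > 0 a real number, and G a simple graph on n vertices. Let D be a clique of G with |D| = s and 1 ≤ s ≤ r such that every vertex v ∈ D has degree d(v) ≥ (1 - 1/r + ε/3)·n in G. Then the number of vertices of G outside D that are adjacent to all vertices of D is at least (1 - s/r + s·ε/3)·n, and in particular is at least s·ε·n/3 > 0. -/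
theorem common_neighbor_count (r : ℕ) (hr : 0 < r) (ε : ℝ) (hε : 0 < ε)
    (n s : ℕ) (G : SimpleGraph (Fin n)) (D : Set (Fin n))
    (hclique : G.IsClique D) (hcard : D.ncard = s) (hs1 : 1 ≤ s) (hsr : s ≤ r)
    (hdeg : ∀ v ∈ D, (1 - 1 / (r : ℝ) + ε / 3) * n ≤ ((G.neighborSet v).ncard : ℝ)) :
    (1 - (s : ℝ) / r + s * ε / 3) * n ≤ (({u | u ∉ D ∧ ∀ v ∈ D, G.Adj u v}).ncard : ℝ) ∧
    (s : ℝ) * ε * n / 3 ≤ (({u | u ∉ D ∧ ∀ v ∈ D, G.Adj u v}).ncard : ℝ) ∧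
    0 < (s : ℝ) * ε * n / 3 := by
  classical
  -- D nonempty hence n ≥ 1
  have hDne : D.Nonempty := by
    rw [Set.nonempty_iff_ne_empty]
    intro h
    rw [h, Set.ncard_empty] at hcard
    omega
  have hn : 0 < n := by
    obtain ⟨v, -⟩ := hDne
    exact v.pos
  set I : Finset (Fin n) := D.toFinset with hI
  have hIcard : I.card = s := by
    rw [hI, ← hcard, Set.ncard_eq_toFinset_card']
  have hmemI : ∀ v, v ∈ I ↔ v ∈ D := fun v => Set.mem_toFinset
  -- the common-neighbor finset
  set T : Finset (Fin n) := Finset.univ.filter (fun u => ∀ v ∈ I, G.Adj v u) with hT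
  -- set equality with the statement's set
  have hset : {u | u ∉ D ∧ ∀ v ∈ D, G.Adj u v} = (T : Set (Fin n)) := by
    ext u
    simp only [Set.mem_setOf_eq, hT, Finset.coe_filter, Finset.mem_univ, true_and,
      Set.mem_setOf_eq]
    constructor
    · rintro ⟨-, h⟩ v hv
      exact (h v ((hmemI v).1 hv)).symm
    · intro h
      refine ⟨fun hu => G.irrefl (h u ((hmemI u).2 hu)), fun v hv => (h v ((hmemI v).2 hv)).symm⟩
  have hncard : ({u | u ∉ D ∧ ∀ v ∈ D, G.Adj u v}).ncard = T.card := by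
    rw [hset, Set.ncard_coe_finset]
  -- complement of T is covered by complements of neighbor finsets
  have hcompl : Tᶜ ⊆ I.biUnion (fun v => (G.neighborFinset v)ᶜ) := by
    intro u hu
    simp only [Finset.mem_compl, hT, Finset.mem_filter, Finset.mem_univ, true_and,
      not_forall] at hu
    obtain ⟨v, hv, hadj⟩ := hu
    simp only [Finset.mem_biUnion, Finset.mem_compl, SimpleGraph.mem_neighborFinset]
    exact ⟨v, hv, hadj⟩
  have hcard_compl : Tᶜ.card ≤ ∑ v ∈ I, (n - G.degree v) := by
    calc Tᶜ.card ≤ (I.biUnion (fun v => (G.neighborFinset v)ᶜ)).card :=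
          Finset.card_le_card hcompl
      _ ≤ ∑ v ∈ I, (G.neighborFinset v)ᶜ.card := Finset.card_biUnion_le
      _ = ∑ v ∈ I, (n - G.degree v) := by
          refine Finset.sum_congr rfl fun v _ => ?_
          rw [Finset.card_compl, Fintype.card_fin, SimpleGraph.degree]
  have hTcard : n - ∑ v ∈ I, (n - G.degree v) ≤ T.card := by
    have h1 : Tᶜ.card = n - T.card := by
      rw [Finset.card_compl, Fintype.card_fin]
    have h2 : T.card ≤ n := by
      have := Finset.card_le_univ T
      simpa [Fintype.card_fin] using this
    omega
  -- real-valued bound on each term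
  have hterm : ∀ v ∈ I, ((n - G.degree v : ℕ) : ℝ) ≤ (1 / (r : ℝ) - ε / 3) * n := by
    intro v hv
    have hd := hdeg v ((hmemI v).1 hv)
    have hdeq : ((G.neighborSet v).ncard : ℝ) = (G.degree v : ℝ) := by
      rw [Set.ncard_eq_toFinset_card', SimpleGraph.degree, SimpleGraph.neighborFinset_def]
    rw [hdeq] at hd
    have hdn : G.degree v ≤ n := by
      have h1 : G.degree v ≤ Fintype.card (Fin n) := Finset.card_le_univ _
      rwa [Fintype.card_fin] at h1
    rw [Nat.cast_sub hdn]
    nlinarith [Nat.cast_nonneg (α := ℝ) n]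
  -- sum bound
  have hsum : ((∑ v ∈ I, (n - G.degree v) : ℕ) : ℝ) ≤ (s : ℝ) * ((1 / (r : ℝ) - ε / 3) * n) := by
    push_cast
    calc ∑ v ∈ I, ((n - G.degree v : ℕ) : ℝ) ≤ ∑ _v ∈ I, (1 / (r : ℝ) - ε / 3) * n :=
          Finset.sum_le_sum hterm
      _ = (s : ℝ) * ((1 / (r : ℝ) - ε / 3) * n) := by
          rw [Finset.sum_const, hIcard, nsmul_eq_mul]
  have hsum_n : ∑ v ∈ I, (n - G.degree v) ≤ n := by
    by_contra h
    push_neg at h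
    have hr' : (0 : ℝ) < r := Nat.cast_pos.2 hr
    have hle : (1 / (r : ℝ) - ε / 3) * n ≤ n := by
      have h1 : 1 / (r : ℝ) ≤ 1 := by
        rw [div_le_one hr']
        exact_mod_cast hr
      nlinarith [Nat.cast_nonneg (α := ℝ) n]
    have hlt : (n : ℝ) < ((∑ v ∈ I, (n - G.degree v) : ℕ) : ℝ) := by exact_mod_cast h
    have h1s : (1 : ℝ) ≤ s := by exact_mod_cast hs1
    have hn'' : (0 : ℝ) < n := by exact_mod_cast hn
    have ha : (s : ℝ) / r ≤ 1 := by
      rw [div_le_one hr']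
      exact_mod_cast hsr
    have key : (s : ℝ) * ((1 / (r : ℝ) - ε / 3) * n) < n := by
      have hb : (s : ℝ) / r * n ≤ n := mul_le_of_le_one_left hn''.le ha
      have hc : (0 : ℝ) < s * ε * n := by positivity
      have hd : (s : ℝ) * ((1 / (r : ℝ) - ε / 3) * n) = (s : ℝ) / r * n - s * ε * n / 3 := by
        field_simp
      linarith
    linarith
  -- main inequality on T.card
  have hmain : (1 - (s : ℝ) / r + s * ε / 3) * n ≤ (T.card : ℝ) := by
    have h1 : ((n - ∑ v ∈ I, (n - G.degree v) : ℕ) : ℝ) ≤ (T.card : ℝ) := by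
      exact_mod_cast hTcard
    have h2 : ((n - ∑ v ∈ I, (n - G.degree v) : ℕ) : ℝ)
        = (n : ℝ) - ((∑ v ∈ I, (n - G.degree v) : ℕ) : ℝ) :=
      Nat.cast_sub hsum_n
    rw [h2] at h1
    have hr' : (0 : ℝ) < r := Nat.cast_pos.2 hr
    have : (1 - (s : ℝ) / r + s * ε / 3) * n = (n : ℝ) - (s : ℝ) * ((1 / (r : ℝ) - ε / 3) * n) := by
      field_simp
      ring
    rw [this]
    linarith
  rw [hncard]
  have hr' : (0 : ℝ) < r := Nat.cast_pos.2 hr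
  have hs' : (s : ℝ) ≤ r := by exact_mod_cast hsr
  have h1s : (1 : ℝ) ≤ s := by exact_mod_cast hs1
  have hn' : (0 : ℝ) < n := by exact_mod_cast hn
  have hkey : (s : ℝ) * ε * n / 3 ≤ (1 - (s : ℝ) / r + s * ε / 3) * n := by
    have ha : (s : ℝ) / r ≤ 1 := by rw [div_le_one hr']; exact hs'
    have hb : (s : ℝ) / r * n ≤ n := mul_le_of_le_one_left hn'.le ha
    have hd : (1 - (s : ℝ) / r + s * ε / 3) * n = n - (s : ℝ) / r * n + s * ε * n / 3 := by
      ring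
    linarith
  refine ⟨hmain, le_trans hkey hmain, ?_⟩
  positivity
end

section
/- Let r be a positive integer and ε > 0 a real number, and set δ = ε/4. There exists a positive integer N = N(ε) such that for every simple graph G on n > N vertices with independence number α(G) ≤ δ·n and every clique D of G with |D| ≤ 2r, if every vertex v ∈ D has degree d(v) ≥ (1 - 1/r + ε/3)·n in G, then there exists a clique D* of G with |D*| = |D| + 1 and |D* ∩ D| ≥ |D| - 1. -/
open Finset

lemma exists_adj_of_forall_isIndepSet_ncard_le {V : Type*} {G : SimpleGraph V} {c : ℝ}
    (hα : ∀ s : Set V, IsIndepSet G s → (s.ncard : ℝ) ≤ c) {t : Finset V} (ht : c < #t) :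
    ∃ x ∈ t, ∃ y ∈ t, G.Adj x y := by
  by_contra! h
  have := hα t fun x hx y hy _ => h x hx y hy
  rw [Set.ncard_coe_finset] at this
  linarith

lemma Finset.two_mul_card_le_card_filter_eq_one_add_sum {ι : Type*} {s : Finset ι} {f : ι → ℕ}
    (hf : ∀ i ∈ s, 1 ≤ f i) : 2 * #s ≤ #{i ∈ s | f i = 1} + ∑ i ∈ s, f i := by
  rw [card_filter, ← sum_add_distrib, mul_comm, ← smul_eq_mul]
  refine card_nsmul_le_sum _ _ _ fun i hi => ?_
  have := hf i hi
  split_ifs <;> omega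

namespace SimpleGraph

variable {V : Type*} [DecidableEq V] {G : SimpleGraph V} {D : Finset V}

def IsRotationExtension (G : SimpleGraph V) (D Dstar : Finset V) : Prop :=
  G.IsClique (Dstar : Set V) ∧ #Dstar = #D + 1 ∧ #D - 1 ≤ #(Dstar ∩ D)

lemma isRotationExtension_empty_singleton (x : V) : G.IsRotationExtension ∅ {x} := by
  simp [IsRotationExtension]

lemma isRotationExtension_insert (hD : G.IsClique (D : Set V)) {x : V} (hx : x ∉ D)
    (hxD : ∀ v ∈ D, G.Adj v x) : G.IsRotationExtension D (insert x D) := by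
  refine ⟨?_, card_insert_of_notMem hx, ?_⟩
  · rw [coe_insert]
    exact hD.insert fun v hv _ => (hxD v hv).symm
  · rw [inter_eq_right.mpr (subset_insert x D)]
    exact Nat.sub_le _ _

lemma isRotationExtension_swap (hD : G.IsClique (D : Set V)) {u x y : V} (hu : u ∈ D)
    (hx : x ∉ D) (hy : y ∉ D) (hxy : G.Adj x y) (hxD : ∀ v ∈ D, v ≠ u → G.Adj v x)
    (hyD : ∀ v ∈ D, v ≠ u → G.Adj v y) :
    G.IsRotationExtension D (insert x (insert y (D.erase u))) := by
  have hyD' : y ∉ D.erase u := fun h => hy (mem_of_mem_erase h)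
  have hxD' : x ∉ insert y (D.erase u) := by
    rw [mem_insert, not_or]
    exact ⟨hxy.ne, fun h => hx (mem_of_mem_erase h)⟩
  refine ⟨?_, ?_, ?_⟩
  · have hErase : G.IsClique (D.erase u : Set V) := hD.subset (coe_subset.mpr (erase_subset u D))
    rw [coe_insert, coe_insert]
    refine (hErase.insert fun v hv _ => ?_).insert fun v hv _ => ?_
    · rw [mem_coe, mem_erase] at hv
      exact (hyD v hv.2 hv.1).symm
    · rcases hv with rfl | hv
      · exact hxy
      · rw [mem_coe, mem_erase] at hv
        exact (hxD v hv.2 hv.1).symm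
  · rw [card_insert_of_notMem hxD', card_insert_of_notMem hyD', card_erase_of_mem hu]
    have := card_pos.mpr ⟨u, hu⟩
    omega
  · rw [← card_erase_of_mem hu]
    refine card_le_card (subset_inter ?_ (erase_subset u D))
    exact (subset_insert _ _).trans (subset_insert _ _)

section Counting

variable [Fintype V] [DecidableRel G.Adj]

def privateNonNbrs (G : SimpleGraph V) [DecidableRel G.Adj] (D : Finset V) (u : V) : Finset V :=
  {x ∈ Dᶜ | #{v ∈ D | ¬G.Adj v x} = 1 ∧ ¬G.Adj u x}

lemma notMem_of_mem_privateNonNbrs {u x : V} (hx : x ∈ G.privateNonNbrs D u) : x ∉ D := by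
  simpa [privateNonNbrs] using (mem_filter.mp hx).1

lemma adj_of_mem_privateNonNbrs {u x : V} (hx : x ∈ G.privateNonNbrs D u) (hu : u ∈ D) :
    ∀ v ∈ D, v ≠ u → G.Adj v x := by
  intro v hv hvu
  obtain ⟨-, hone, hux⟩ := mem_filter.mp hx
  obtain ⟨w, hw⟩ := card_eq_one.mp hone
  by_contra hvx
  have hu' : u ∈ ({w} : Finset V) := hw ▸ mem_filter.mpr ⟨hu, hux⟩
  have hv' : v ∈ ({w} : Finset V) := hw ▸ mem_filter.mpr ⟨hv, hvx⟩
  exact hvu ((mem_singleton.mp hv').trans (mem_singleton.mp hu').symm)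

lemma sum_card_privateNonNbrs :
    ∑ u ∈ D, #(G.privateNonNbrs D u) = #{x ∈ Dᶜ | #{v ∈ D | ¬G.Adj v x} = 1} := by
  simp only [privateNonNbrs, ← filter_filter, card_filter (p := fun x => ¬G.Adj _ x)]
  rw [sum_comm, card_eq_sum_ones]
  refine sum_congr rfl fun x hx => ?_
  rw [← card_filter, (mem_filter.mp hx).2]

lemma sum_card_nonNbrs_compl :
    ∑ v ∈ D, #{x ∈ Dᶜ | ¬G.Adj v x} = ∑ x ∈ Dᶜ, #{v ∈ D | ¬G.Adj v x} := by
  simp only [card_filter]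
  exact sum_comm

lemma two_mul_card_compl_le (hcommon : ∀ x ∉ D, ∃ v ∈ D, ¬G.Adj v x) :
    2 * #Dᶜ ≤ ∑ u ∈ D, #(G.privateNonNbrs D u) + ∑ v ∈ D, #{x ∈ Dᶜ | ¬G.Adj v x} := by
  rw [sum_card_privateNonNbrs, sum_card_nonNbrs_compl]
  refine two_mul_card_le_card_filter_eq_one_add_sum fun x hx => ?_
  obtain ⟨v, hv, hvx⟩ := hcommon x (by simpa using hx)
  exact card_pos.mpr ⟨v, mem_filter.mpr ⟨hv, hvx⟩⟩

lemma card_filter_not_adj_add_degree_le (s : Finset V) (v : V) :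
    #{x ∈ s | ¬G.Adj v x} + G.degree v ≤ Fintype.card V := by
  calc #{x ∈ s | ¬G.Adj v x} + G.degree v
      ≤ #(G.neighborFinset v)ᶜ + #(G.neighborFinset v) := by
        refine Nat.add_le_add_right (card_le_card fun x hx => ?_) _
        simpa using (mem_filter.mp hx).2
    _ = Fintype.card V := card_compl_add_card _

lemma exists_card_privateNonNbrs_gt {r : ℕ} {ε : ℝ} (hε : 0 < ε) (hD : D.Nonempty)
    (hDr : #D ≤ 2 * r) (hdeg : ∀ v ∈ D, (1 - 1 / (r : ℝ) + ε / 3) * Fintype.card V ≤ G.degree v)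
    (hV : 24 / ε < Fintype.card V) (hcommon : ∀ x ∉ D, ∃ v ∈ D, ¬G.Adj v x) :
    ∃ u ∈ D, ε / 4 * Fintype.card V < #(G.privateNonNbrs D u) := by
  have hnonNbrs : ∀ v ∈ D, (#{x ∈ Dᶜ | ¬G.Adj v x} : ℝ) ≤ (1 / r - ε / 3) * Fintype.card V := by
    intro v hv
    have := card_filter_not_adj_add_degree_le (G := G) Dᶜ v
    have : (#{x ∈ Dᶜ | ¬G.Adj v x} : ℝ) + G.degree v ≤ Fintype.card V := mod_cast this
    linarith [hdeg v hv]
  have hcount : 2 * ((Fintype.card V : ℝ) - #D) ≤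
      ∑ u ∈ D, (#(G.privateNonNbrs D u) : ℝ) + #D * ((1 / r - ε / 3) * Fintype.card V) := by
    have hsum := sum_le_sum hnonNbrs
    rw [sum_const, nsmul_eq_mul] at hsum
    have := two_mul_card_compl_le hcommon
    rw [card_compl] at this
    have : 2 * ((Fintype.card V : ℝ) - #D) ≤
        ∑ u ∈ D, (#(G.privateNonNbrs D u) : ℝ) + ∑ v ∈ D, (#{x ∈ Dᶜ | ¬G.Adj v x} : ℝ) := by
      rw [← Nat.cast_sub (card_le_univ D)]
      exact_mod_cast this
    linarith
  have hkr : (#D : ℝ) / r * Fintype.card V ≤ 2 * Fintype.card V :=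
    mul_le_mul_of_nonneg_right
      (div_le_of_le_mul₀ (by positivity) (by norm_num) (by exact_mod_cast hDr)) (by positivity)
  have hgap : 0 < (#D : ℝ) * (Fintype.card V * ε - 24) :=
    mul_pos (mod_cast card_pos.mpr hD) (by linarith [(div_lt_iff₀ hε).mp hV])
  refine exists_lt_of_sum_lt ?_
  rw [sum_const, nsmul_eq_mul]
  -- with `k = #D`: `2 (n - k) - k (n / r - ε n / 3) ≥ k ε n / 3 - 2 k > k ε n / 4`
  have : (#D : ℝ) * ((1 / r - ε / 3) * Fintype.card V) =
      #D / r * Fintype.card V - #D * (Fintype.card V * ε) / 3 := by ring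
  linarith

end Counting

end SimpleGraph

theorem clique_rotation_extension_general (r : ℕ) (ε : ℝ) (hε : 0 < ε) :
    ∃ N : ℕ, 0 < N ∧
      ∀ n : ℕ, n > N → ∀ G : SimpleGraph (Fin n),
        (∀ s : Set (Fin n), IsIndepSet G s → (s.ncard : ℝ) ≤ (ε / 4) * n) →
        ∀ D : Finset (Fin n), G.IsClique (D : Set (Fin n)) → D.card ≤ 2 * r →
        (∀ v ∈ D, (1 - 1 / (r : ℝ) + ε / 3) * n ≤ ((G.neighborSet v).ncard : ℝ)) →
        ∃ Dstar : Finset (Fin n), G.IsClique (Dstar : Set (Fin n)) ∧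
          Dstar.card = D.card + 1 ∧ D.card - 1 ≤ (Dstar ∩ D).card := by
  classical
  refine ⟨⌈24 / ε⌉₊ + 1, Nat.succ_pos _, fun n hn G hα D hD hDr hdeg => ?_⟩
  have hn' : 24 / ε < Fintype.card (Fin n) := by
    rw [Fintype.card_fin]
    exact Nat.lt_of_ceil_lt (by omega)
  have hdeg' : ∀ v ∈ D, (1 - 1 / (r : ℝ) + ε / 3) * Fintype.card (Fin n) ≤ G.degree v := by
    simpa only [← SimpleGraph.coe_neighborFinset, Set.ncard_coe_finset,
      SimpleGraph.card_neighborFinset_eq_degree, Fintype.card_fin] using hdeg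
  obtain rfl | hDne := D.eq_empty_or_nonempty
  · exact ⟨{⟨0, by omega⟩}, SimpleGraph.isRotationExtension_empty_singleton _⟩
  by_cases hcommon : ∃ x ∉ D, ∀ v ∈ D, G.Adj v x
  · obtain ⟨x, hx, hxD⟩ := hcommon
    exact ⟨_, SimpleGraph.isRotationExtension_insert hD hx hxD⟩
  push Not at hcommon
  obtain ⟨u, hu, hbig⟩ :=
    SimpleGraph.exists_card_privateNonNbrs_gt hε hDne hDr hdeg' hn' hcommon
  rw [Fintype.card_fin] at hbig
  obtain ⟨x, hx, y, hy, hxy⟩ := exists_adj_of_forall_isIndepSet_ncard_le hα hbig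
  have hxD := SimpleGraph.adj_of_mem_privateNonNbrs hx hu
  have hyD := SimpleGraph.adj_of_mem_privateNonNbrs hy hu
  exact ⟨_, SimpleGraph.isRotationExtension_swap hD hu
    (SimpleGraph.notMem_of_mem_privateNonNbrs hx) (SimpleGraph.notMem_of_mem_privateNonNbrs hy)
    hxy hxD hyD⟩

theorem clique_rotation_extension (r : ℕ) (hr : 0 < r) (ε : ℝ) (hε : 0 < ε) :
    ∃ N : ℕ, 0 < N ∧
      ∀ n : ℕ, n > N → ∀ G : SimpleGraph (Fin n),
        (∀ s : Set (Fin n), IsIndepSet G s → (s.ncard : ℝ) ≤ (ε / 4) * n) →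
        ∀ D : Finset (Fin n), G.IsClique (D : Set (Fin n)) → D.card ≤ 2 * r →
        (∀ v ∈ D, (1 - 1 / (r : ℝ) + ε / 3) * n ≤ ((G.neighborSet v).ncard : ℝ)) →
        ∃ Dstar : Finset (Fin n), G.IsClique (Dstar : Set (Fin n)) ∧
          Dstar.card = D.card + 1 ∧ D.card - 1 ≤ (Dstar ∩ D).card :=
  clique_rotation_extension_general r ε hε
end

section
/- Let r be a positive integer, ε > 0 a real number, and G a simple graph on n vertices. Let D be a clique of G with |D| = s and 1 ≤ s ≤ 2r such that every vertex v ∈ D has degree d(v) ≥ (1 - 1/r + ε/3)·n in G. Suppose that no vertex of G outside D is adjacent to all vertices of D. Then the number of vertices outside D that are adjacent to exactly s - 1 vertices of D is at least (2 - s/r + s·ε/3)·n - s. -/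
theorem almost_common_neighbor_count (r : ℕ) (hr : 0 < r) (ε : ℝ) (hε : 0 < ε)
    (n s : ℕ) (G : SimpleGraph (Fin n)) (D : Set (Fin n))
    (hclique : G.IsClique D) (hcard : D.ncard = s) (hs1 : 1 ≤ s) (hsr : s ≤ 2 * r)
    (hdeg : ∀ v ∈ D, (1 - 1 / (r : ℝ) + ε / 3) * n ≤ ((G.neighborSet v).ncard : ℝ))
    (hnocommon : ¬ ∃ u, u ∉ D ∧ ∀ v ∈ D, G.Adj u v) :
    (2 - (s : ℝ) / r + s * ε / 3) * n - s ≤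
      (({u | u ∉ D ∧ (D ∩ G.neighborSet u).ncard = s - 1}).ncard : ℝ) := by
  classical
  set W : Set (Fin n) := {u | u ∉ D ∧ (D ∩ G.neighborSet u).ncard = s - 1} with hWdef
  set Df : Finset (Fin n) := D.toFinset with hDfdef
  set Wf : Finset (Fin n) := W.toFinset with hWfdef
  have hDcard : Df.card = s := by rw [hDfdef, ← Set.ncard_eq_toFinset_card' D, hcard]
  have hWcard : W.ncard = Wf.card := Set.ncard_eq_toFinset_card' W
  set f : Fin n → ℕ := fun u => (Df.filter (fun v => G.Adj u v)).card with hfdef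
  set d : Fin n → ℕ := fun v => (Finset.univ.filter (fun u => G.Adj v u)).card with hddef
  -- f u = (D ∩ N(u)).ncard
  have hf_eq : ∀ u, (D ∩ G.neighborSet u).ncard = f u := by
    intro u
    rw [Set.ncard_eq_toFinset_card']
    congr 1
    ext v
    simp [hfdef, hDfdef, SimpleGraph.mem_neighborSet]
  have hd_eq : ∀ v, (G.neighborSet v).ncard = d v := by
    intro v
    rw [Set.ncard_eq_toFinset_card']
    congr 1
    ext u
    simp [hddef, SimpleGraph.mem_neighborSet]
  -- double counting
  have hdouble : ∑ v ∈ Df, d v = ∑ u : Fin n, f u := by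
    simp only [hddef, hfdef, Finset.card_filter]
    rw [Finset.sum_comm]
    apply Finset.sum_congr rfl
    intro u _
    apply Finset.sum_congr rfl
    intro v _
    simp [SimpleGraph.adj_comm]
  -- bounds on f
  have hfout : ∀ u, u ∉ D → f u ≤ s - 1 := by
    intro u hu
    have h1 : f u ≤ s := hDcard ▸ Finset.card_filter_le _ _
    have h2 : f u ≠ s := by
      intro h
      have : Df.filter (fun v => G.Adj u v) = Df :=
        Finset.eq_of_subset_of_card_le (Finset.filter_subset _ _) (by show Df.card ≤ f u; omega)
      apply hnocommon
      refine ⟨u, hu, fun v hv => ?_⟩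
      have : v ∈ Df.filter (fun v => G.Adj u v) := by
        rw [this]; simpa [hDfdef] using hv
      exact (Finset.mem_filter.1 this).2
    omega
  have hfle : ∀ u, u ∈ Df ∪ Wf → f u ≤ s - 1 := by
    intro u hu
    rcases Finset.mem_union.1 hu with h | h
    · have hsub : Df.filter (fun v => G.Adj u v) ⊆ Df.erase u := by
        intro v hv
        rw [Finset.mem_filter] at hv
        exact Finset.mem_erase.2 ⟨fun he => G.irrefl (he ▸ hv.2), hv.1⟩
      calc f u ≤ (Df.erase u).card := Finset.card_le_card hsub
        _ = s - 1 := by rw [Finset.card_erase_of_mem h, hDcard]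
    · have huW : u ∈ W := by simpa [hWfdef] using h
      have := huW.2
      rw [hf_eq] at this
      omega
  have hnotin : ∀ u, u ∉ Df ∪ Wf → f u + 1 ≤ s - 1 := by
    intro u hu
    rw [Finset.mem_union, not_or] at hu
    have huD : u ∉ D := by simpa [hDfdef] using hu.1
    have huW : u ∉ W := by simpa [hWfdef] using hu.2
    have h1 : f u ≤ s - 1 := hfout u huD
    have h2 : f u ≠ s - 1 := by
      intro h
      exact huW ⟨huD, by rw [hf_eq]; exact h⟩
    omega
  -- disjointness and cards
  have hdisj : Disjoint Df Wf := by
    rw [Finset.disjoint_left]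
    intro u hu huW
    have : u ∈ W := by simpa [hWfdef] using huW
    exact this.1 (by simpa [hDfdef] using hu)
  have hAcard : (Df ∪ Wf).card = s + Wf.card := by
    rw [Finset.card_union_of_disjoint hdisj, hDcard]
  have hAn : s + Wf.card ≤ n := by
    rw [← hAcard]
    simpa using Finset.card_le_card (Finset.subset_univ (Df ∪ Wf))
  -- sum upper bound
  have hsumbound : (∑ u : Fin n, f u) + (n - (s + Wf.card)) ≤ (s - 1) * n := by
    have hsplit : ∑ u ∈ Finset.univ \ (Df ∪ Wf), f u + ∑ u ∈ Df ∪ Wf, f u = ∑ u : Fin n, f u :=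
      Finset.sum_sdiff (Finset.subset_univ _)
    have hcompl : (Finset.univ \ (Df ∪ Wf)).card = n - (s + Wf.card) := by
      rw [Finset.card_sdiff_of_subset (Finset.subset_univ _), hAcard, Finset.card_univ, Fintype.card_fin]
    have h1 : ∑ u ∈ Df ∪ Wf, f u ≤ (s - 1) * (Df ∪ Wf).card := by
      calc ∑ u ∈ Df ∪ Wf, f u ≤ ∑ _u ∈ Df ∪ Wf, (s - 1) := Finset.sum_le_sum hfle
        _ = (Df ∪ Wf).card * (s - 1) := by rw [Finset.sum_const, smul_eq_mul]
        _ = (s - 1) * (Df ∪ Wf).card := Nat.mul_comm _ _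
    have h2 : ∑ u ∈ Finset.univ \ (Df ∪ Wf), f u + (Finset.univ \ (Df ∪ Wf)).card
        ≤ (s - 1) * (Finset.univ \ (Df ∪ Wf)).card := by
      calc ∑ u ∈ Finset.univ \ (Df ∪ Wf), f u + (Finset.univ \ (Df ∪ Wf)).card
          = ∑ u ∈ Finset.univ \ (Df ∪ Wf), (f u + 1) := by
            rw [Finset.sum_add_distrib, Finset.sum_const, smul_eq_mul, mul_one]
        _ ≤ ∑ _u ∈ Finset.univ \ (Df ∪ Wf), (s - 1) :=
            Finset.sum_le_sum (fun u hu => hnotin u (Finset.mem_sdiff.1 hu).2)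
        _ = (s - 1) * (Finset.univ \ (Df ∪ Wf)).card := by
            rw [Finset.sum_const, smul_eq_mul, Nat.mul_comm]
    have hcards : (Df ∪ Wf).card + (Finset.univ \ (Df ∪ Wf)).card = n := by
      rw [Finset.card_sdiff_of_subset (Finset.subset_univ _), Finset.card_univ, Fintype.card_fin]
      omega
    calc (∑ u : Fin n, f u) + (n - (s + Wf.card))
        = ∑ u ∈ Df ∪ Wf, f u + (∑ u ∈ Finset.univ \ (Df ∪ Wf), f u
            + (Finset.univ \ (Df ∪ Wf)).card) := by rw [← hcompl]; omega
      _ ≤ (s - 1) * (Df ∪ Wf).card + (s - 1) * (Finset.univ \ (Df ∪ Wf)).card := by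
          exact Nat.add_le_add h1 h2
      _ = (s - 1) * n := by rw [← Nat.mul_add, hcards]
  -- sum lower bound (real)
  have hlow : (s : ℝ) * ((1 - 1 / (r : ℝ) + ε / 3) * n) ≤ ((∑ u : Fin n, f u : ℕ) : ℝ) := by
    rw [← hdouble]
    push_cast
    calc (s : ℝ) * ((1 - 1 / (r : ℝ) + ε / 3) * n)
        = Df.card • ((1 - 1 / (r : ℝ) + ε / 3) * n) := by
          rw [hDcard, nsmul_eq_mul]
      _ ≤ ∑ v ∈ Df, (d v : ℝ) := by
          apply Finset.card_nsmul_le_sum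
          intro v hv
          rw [← hd_eq v]
          exact hdeg v (by simpa [hDfdef] using hv)
  -- cast the upper bound to ℝ
  have hsumR : ((∑ u : Fin n, f u : ℕ) : ℝ) + ((n : ℝ) - s - Wf.card) ≤ ((s : ℝ) - 1) * n := by
    have := hsumbound
    have hc : ((((∑ u : Fin n, f u) + (n - (s + Wf.card))) : ℕ) : ℝ) ≤ (((s - 1) * n : ℕ) : ℝ) := by
      exact_mod_cast this
    rw [Nat.cast_add, Nat.cast_sub hAn, Nat.cast_mul, Nat.cast_sub hs1] at hc
    push_cast at hc ⊢
    linarith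
  -- finish
  rw [hWdef] at hWcard ⊢
  rw [hWcard]
  have key : (s : ℝ) * ((1 - 1 / (r : ℝ) + ε / 3) * n) + n - s - ((s : ℝ) - 1) * n
      = (2 - (s : ℝ) / r + s * ε / 3) * n - s := by ring
  linarith
end

section
/- Let r be a positive integer and ε > 0 a real number, and set δ = ε/4. There exists a positive integer N = N(ε) such that for every simple graph G on n > N vertices with independence number α(G) ≤ δ·n and minimum degree δ(G) ≥ (1 - 1/r + ε/3)·n, and for every clique B of G with |B| = r + 1, there exists a clique C of G with |C| = 2r + 1 and C ∩ B ≠ ∅. -/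
open Finset

lemma step_lemma (n r : ℕ) (hr : 0 < r) (ε : ℝ) (hε : 0 < ε) (hn : 0 < n)
    (G : SimpleGraph (Fin n))
    (hα : ∀ s : Set (Fin n), IsIndepSet G s → (s.ncard : ℝ) ≤ (ε / 4) * n)
    (hδ : ∀ v : Fin n, (1 - 1 / (r : ℝ) + ε / 3) * n ≤ ((G.neighborSet v).ncard : ℝ))
    (A : Finset (Fin n)) (hA : G.IsClique (A : Set (Fin n)))
    (h1 : 1 ≤ A.card) (h2 : A.card ≤ 2 * r) :
    ∃ (A' : Finset (Fin n)) (v : Fin n), v ∈ A ∧ G.IsClique (A' : Set (Fin n)) ∧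
      A'.card = A.card + 1 ∧ A.erase v ⊆ A' := by
  classical
  set b := A.card with hb
  -- the common-neighbor case
  by_cases hS : (Finset.univ.filter fun u => ∀ v ∈ A, G.Adj u v).Nonempty
  · obtain ⟨u, hu⟩ := hS
    simp only [Finset.mem_filter, Finset.mem_univ, true_and] at hu
    have huA : u ∉ A := fun h => G.irrefl (hu u h)
    obtain ⟨v, hv⟩ := Finset.card_pos.mp h1
    refine ⟨insert u A, v, hv, ?_, ?_, ?_⟩
    · rw [Finset.coe_insert]
      exact hA.insert fun w hw _ => hu w hw
    · rw [Finset.card_insert_of_notMem huA]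
    · exact (Finset.erase_subset _ _).trans (Finset.subset_insert _ _)
  · -- every vertex has a non-neighbor in A
    have hne : ∀ u : Fin n, 1 ≤ (A.filter fun v => ¬ G.Adj u v).card := by
      intro u
      rw [Nat.one_le_iff_ne_zero, Ne, Finset.card_eq_zero, ← Ne,
        ← Finset.nonempty_iff_ne_empty]
      by_contra h
      push_neg at h
      simp only [Finset.not_nonempty_iff_eq_empty, Finset.filter_eq_empty_iff, not_not] at h
      exact hS ⟨u, by simpa using h⟩
    -- degree bound on number of non-neighbors
    have hd : ∀ v : Fin n,
        (((Finset.univ.filter fun u => ¬ G.Adj v u).card : ℝ)) ≤ (1 / r - ε / 3) * n := by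
      intro v
      have hdeg : (G.neighborSet v).ncard = (Finset.univ.filter fun u => G.Adj v u).card := by
        rw [show G.neighborSet v = ↑(Finset.univ.filter fun u => G.Adj v u) by
          ext x; simp [SimpleGraph.neighborSet], Set.ncard_coe_finset]
      have hsplit := Finset.card_filter_add_card_filter_not
        (s := (Finset.univ : Finset (Fin n))) (p := fun u => G.Adj v u)
      have := hδ v
      rw [hdeg] at this
      have hcu : (Finset.univ : Finset (Fin n)).card = n := by simp
      have : ((Finset.univ.filter fun u => ¬ G.Adj v u).card : ℝ)
          = (n : ℝ) - ((Finset.univ.filter fun u => G.Adj v u).card : ℝ) := by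
        have := hsplit
        rw [hcu] at this
        push_cast [← this]
        ring
      rw [this]
      nlinarith [hδ v, hdeg]
    -- double counting
    have hsum : ∑ u : Fin n, (A.filter fun v => ¬ G.Adj u v).card
        = ∑ v ∈ A, (Finset.univ.filter fun u => ¬ G.Adj v u).card := by
      simp only [Finset.card_filter]
      rw [Finset.sum_comm]
      apply Finset.sum_congr rfl
      intro v _
      apply Finset.sum_congr rfl
      intro u _
      simp [G.adj_comm]
    have hSc : ((∑ u : Fin n, (A.filter fun v => ¬ G.Adj u v).card : ℕ) : ℝ)
        ≤ (b : ℝ) * ((1 / r - ε / 3) * n) := by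
      rw [hsum]
      push_cast
      calc (∑ v ∈ A, ((Finset.univ.filter fun u => ¬ G.Adj v u).card : ℝ))
          ≤ ∑ _v ∈ A, (1 / (r:ℝ) - ε / 3) * n := Finset.sum_le_sum fun v _ => hd v
        _ = (b : ℝ) * ((1 / r - ε / 3) * n) := by rw [Finset.sum_const, hb]; ring
    -- T : vertices with exactly one non-neighbor in A
    set T := Finset.univ.filter fun u : Fin n => (A.filter fun v => ¬ G.Adj u v).card = 1 with hT
    have h2n : 2 * n ≤ (∑ u : Fin n, (A.filter fun v => ¬ G.Adj u v).card) + T.card := by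
      have : T.card = ∑ u : Fin n, if (A.filter fun v => ¬ G.Adj u v).card = 1 then 1 else 0 := by
        rw [hT, Finset.card_filter]
      rw [this, ← Finset.sum_add_distrib]
      calc 2 * n = ∑ _u : Fin n, 2 := by simp [Finset.sum_const]; ring
        _ ≤ _ := by
            apply Finset.sum_le_sum
            intro u _
            by_cases h : (A.filter fun v => ¬ G.Adj u v).card = 1
            · simp [h]
            · have := hne u
              simp only [h, if_false]
              omega
    -- T_v
    have hTsub : T ⊆ A.biUnion fun v =>
        Finset.univ.filter fun u => (A.filter fun w => ¬ G.Adj u w) = {v} := by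
      intro u hu
      rw [hT, Finset.mem_filter] at hu
      obtain ⟨v, hv⟩ := Finset.card_eq_one.mp hu.2
      have hvA : v ∈ A := by
        have : v ∈ A.filter fun w => ¬ G.Adj u w := by rw [hv]; exact Finset.mem_singleton_self v
        exact (Finset.mem_filter.mp this).1
      exact Finset.mem_biUnion.mpr ⟨v, hvA, by simp [hv]⟩
    -- some T_v is not independent
    have hex : ∃ v ∈ A, ¬ IsIndepSet G
        ↑(Finset.univ.filter fun u => (A.filter fun w => ¬ G.Adj u w) = {v}) := by
      by_contra h
      push_neg at h
      have hTv : ∀ v ∈ A,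
          (((Finset.univ.filter fun u => (A.filter fun w => ¬ G.Adj u w) = {v}).card : ℝ))
            ≤ ε / 4 * n := by
        intro v hv
        have := hα _ (h v hv)
        rwa [Set.ncard_coe_finset] at this
      have hTle : (T.card : ℝ) ≤ (b : ℝ) * (ε / 4 * n) := by
        calc (T.card : ℝ) ≤ ((A.biUnion fun v =>
              Finset.univ.filter fun u => (A.filter fun w => ¬ G.Adj u w) = {v}).card : ℝ) := by
              exact_mod_cast Finset.card_le_card hTsub
          _ ≤ ((∑ v ∈ A, (Finset.univ.filter fun u =>
              (A.filter fun w => ¬ G.Adj u w) = {v}).card : ℕ) : ℝ) := by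
              exact_mod_cast Finset.card_biUnion_le
          _ ≤ ∑ _v ∈ A, ε / 4 * n := by
              push_cast
              exact Finset.sum_le_sum hTv
          _ = (b : ℝ) * (ε / 4 * n) := by rw [Finset.sum_const, hb]; ring
      -- numeric contradiction
      have hb1 : (1 : ℝ) ≤ (b : ℝ) := by exact_mod_cast h1
      have hb2r : (b : ℝ) ≤ 2 * r := by exact_mod_cast h2
      have hr1 : (1 : ℝ) ≤ (r : ℝ) := by exact_mod_cast hr
      have hn1 : (1 : ℝ) ≤ (n : ℝ) := by exact_mod_cast hn
      have hinv : (b : ℝ) * (1 / r) ≤ 2 := by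
        rw [mul_one_div, div_le_iff₀ (by linarith : (0:ℝ) < r)]
        linarith
      have h2n' : 2 * (n : ℝ) ≤ ((∑ u : Fin n, (A.filter fun v => ¬ G.Adj u v).card : ℕ) : ℝ)
          + (T.card : ℝ) := by exact_mod_cast h2n
      nlinarith [mul_pos (mul_pos (lt_of_lt_of_le one_pos hb1) hε)
        (lt_of_lt_of_le one_pos hn1),
        mul_le_mul_of_nonneg_right hinv (le_of_lt (lt_of_lt_of_le one_pos hn1))]
    obtain ⟨v, hvA, hnind⟩ := hex
    rw [IsIndepSet, Set.Pairwise] at hnind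
    push_neg at hnind
    obtain ⟨u, hu, w, hw, huw, hadj⟩ := hnind
    
    simp only [Finset.coe_filter, Set.mem_setOf_eq, Finset.mem_univ, true_and] at hu hw
    -- u, w adjacent to all of A \ {v}
    have hadjall : ∀ x : Fin n, (A.filter fun w' => ¬ G.Adj x w') = {v} →
        ∀ t ∈ A.erase v, G.Adj x t := by
      intro x hx t ht
      rw [Finset.mem_erase] at ht
      by_contra hc
      have : t ∈ A.filter fun w' => ¬ G.Adj x w' := Finset.mem_filter.mpr ⟨ht.2, hc⟩
      rw [hx, Finset.mem_singleton] at this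
      exact ht.1 this
    have hnotmem : ∀ x : Fin n, (A.filter fun w' => ¬ G.Adj x w') = {v} → x ∉ A.erase v := by
      intro x hx hc
      have : x ∈ A.filter fun w' => ¬ G.Adj x w' :=
        Finset.mem_filter.mpr ⟨(Finset.mem_erase.mp hc).2, G.irrefl⟩
      rw [hx, Finset.mem_singleton] at this
      exact (Finset.mem_erase.mp hc).1 this
    refine ⟨insert u (insert w (A.erase v)), v, hvA, ?_, ?_, ?_⟩
    · rw [Finset.coe_insert, Finset.coe_insert]
      have hcl : G.IsClique (↑(A.erase v) : Set (Fin n)) := by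
        apply hA.subset
        simp [Finset.erase_subset]
      have hcl2 : G.IsClique (insert w (↑(A.erase v)) : Set (Fin n)) :=
        hcl.insert fun t ht _ => hadjall w hw t ht
      apply hcl2.insert
      intro t ht htu
      rcases Set.mem_insert_iff.mp ht with h | h
      · subst h; exact hadj
      · exact hadjall u hu t h
    · rw [Finset.card_insert_of_notMem, Finset.card_insert_of_notMem (hnotmem w hw),
        Finset.card_erase_of_mem hvA]
      · omega
      · simp only [Finset.mem_insert]
        push_neg
        exact ⟨huw, hnotmem u hu⟩
    · exact (Finset.subset_insert _ _).trans (Finset.subset_insert _ _)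
theorem big_clique_meeting_base (r : ℕ) (hr : 0 < r) (ε : ℝ) (hε : 0 < ε) :
    ∃ N : ℕ, 0 < N ∧
      ∀ n : ℕ, n > N → ∀ G : SimpleGraph (Fin n),
        (∀ s : Set (Fin n), IsIndepSet G s → (s.ncard : ℝ) ≤ (ε / 4) * n) →
        (∀ v : Fin n, (1 - 1 / (r : ℝ) + ε / 3) * n ≤ ((G.neighborSet v).ncard : ℝ)) →
        ∀ B : Set (Fin n), G.IsClique B → B.ncard = r + 1 →
        ∃ C : Set (Fin n), G.IsClique C ∧ C.ncard = 2 * r + 1 ∧ (C ∩ B).Nonempty := by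
  classical
  refine ⟨1, one_pos, ?_⟩
  intro n hn G hα hδ B hB hBcard
  have hn0 : 0 < n := by omega
  set Bf := (Set.toFinite B).toFinset with hBf
  have hBfc : (Bf : Set (Fin n)) = B := Set.Finite.coe_toFinset _
  have hBfcard : Bf.card = r + 1 := by
    rw [← hBcard, Set.ncard_eq_toFinset_card B (Set.toFinite B)]
  have key : ∀ i : ℕ, i ≤ r → ∃ C : Finset (Fin n), G.IsClique (C : Set (Fin n)) ∧
      C.card = r + 1 + i ∧ r + 1 ≤ (C ∩ Bf).card + i := by
    intro i
    induction i with
    | zero =>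
      intro _
      refine ⟨Bf, by rwa [hBfc], by omega, ?_⟩
      rw [Finset.inter_self, hBfcard]
    | succ i ih =>
      intro hi
      obtain ⟨C, hCcl, hCcard, hCint⟩ := ih (by omega)
      obtain ⟨A', v, hvC, hA'cl, hA'card, hsub⟩ :=
        step_lemma n r hr ε hε hn0 G hα hδ C hCcl (by omega) (by omega)
      refine ⟨A', hA'cl, by omega, ?_⟩
      have hins : C ∩ Bf ⊆ insert v (A' ∩ Bf) := by
        intro x hx
        rw [Finset.mem_inter] at hx
        by_cases hxv : x = v
        · exact Finset.mem_insert.mpr (Or.inl hxv)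
        · exact Finset.mem_insert.mpr (Or.inr (Finset.mem_inter.mpr
            ⟨hsub (Finset.mem_erase.mpr ⟨hxv, hx.1⟩), hx.2⟩))
      have := (Finset.card_le_card hins).trans (Finset.card_insert_le _ _)
      omega
  obtain ⟨C, hCcl, hCcard, hCint⟩ := key r le_rfl
  have hne : (C ∩ Bf).Nonempty := Finset.card_pos.mp (by omega)
  obtain ⟨x, hx⟩ := hne
  rw [Finset.mem_inter] at hx
  refine ⟨(C : Set (Fin n)), hCcl, by rw [Set.ncard_coe_finset]; omega, ⟨x, hx.1, ?_⟩⟩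
  rw [← hBfc]
  exact hx.2
end
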